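/- There exists an instance of a star graph and two agents with identical binary additive utilities that admits a connected allocation which is PMMS but not EF1. -/

import Mathlib

namespace GraphFair

variable {V : Type*}

/-- A bundle is connected if it is empty or induces a connected subgraph of `G`. -/
def BundleConn (G : SimpleGraph V) (B : Finset V) : Prop :=
  B = ∅ ∨ (G.induce (B : Set V)).Connected

/-- A connected allocation of all the items among `n` agents: the bundles cover `V`,
are pairwise disjoint, and each bundle is connected in `G`. -/
def IsConnAlloc (G : SimpleGraph V) {n : ℕ} (A : Fin n → Finset V) : Prop :=
  (∀ v : V, ∃ i, v ∈ A i) ∧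
  (∀ i j : Fin n, i ≠ j → Disjoint (A i) (A j)) ∧
  (∀ i, BundleConn G (A i))

variable [DecidableEq V]

/-- Partitions of `X` into two bundles, each connected in the induced subgraph `G[X]`
(for `Y ⊆ X`, connectivity of `Y` in `G[X]` is the same as connectivity of `Y` in `G`). -/
def Part2 (G : SimpleGraph V) (X : Finset V) : Set (Finset V × Finset V) :=
  {p | p.1 ∪ p.2 = X ∧ Disjoint p.1 p.2 ∧ BundleConn G p.1 ∧ BundleConn G p.2}

/-- The pairwise maximin share of a bundle `X` with respect to utility `u`:
the maximum over partitions of `X` into two connected bundles of the minimum utility. -/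
noncomputable def pmms (G : SimpleGraph V) (u : Finset V → ℝ) (X : Finset V) : ℝ :=
  sSup ((fun p : Finset V × Finset V => min (u p.1) (u p.2)) '' Part2 G X)

/-- The `n`-agent maximin share of the whole vertex set: maximum over partitions of `V`
into `n` connected bundles of the minimum utility of a bundle. -/
noncomputable def mms (G : SimpleGraph V) (u : Finset V → ℝ) (n : ℕ) : ℝ :=
  sSup ((fun A : Fin n → Finset V => ⨅ i, u (A i)) '' {A | IsConnAlloc G A})

/-- Agents `i` and `j` are adjacent under allocation `A`. -/
def AdjUnder (G : SimpleGraph V) {n : ℕ} (A : Fin n → Finset V) (i j : Fin n) : Prop :=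
  ∃ v ∈ A i, ∃ w ∈ A j, G.Adj v w

/-- An allocation is `α`-PMMS if every agent with an empty bundle, and every agent with
respect to each of her neighbours, receives at least `α` times her pairwise maximin share. -/
def IsAlphaPMMS (G : SimpleGraph V) {n : ℕ} (u : Fin n → Finset V → ℝ)
    (A : Fin n → Finset V) (α : ℝ) : Prop :=
  ∀ i j : Fin n, i ≠ j → (A i = ∅ ∨ AdjUnder G A i j) →
    α * pmms G (u i) (A i ∪ A j) ≤ u i (A i)

/-- An allocation is `α`-MMS if every agent receives at least `α` times her maximin share. -/
def IsAlphaMMS (G : SimpleGraph V) {n : ℕ} (u : Fin n → Finset V → ℝ)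
    (A : Fin n → Finset V) (α : ℝ) : Prop :=
  ∀ i : Fin n, α * mms G (u i) n ≤ u i (A i)

/-- An additive (nonnegative) utility function. -/
def AdditiveUtil (u : Finset V → ℝ) : Prop :=
  (∀ X : Finset V, u X = ∑ v ∈ X, u {v}) ∧ ∀ v : V, 0 ≤ u {v}

/-- A binary additive utility function. -/
def BinaryAdditiveUtil (u : Finset V → ℝ) : Prop :=
  (∀ X : Finset V, u X = ∑ v ∈ X, u {v}) ∧ ∀ v : V, u {v} = 0 ∨ u {v} = 1

/-- A monotone (nonnegative) utility function. -/
def MonotoneUtil (u : Finset V → ℝ) : Prop :=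
  (∀ X Y : Finset V, X ⊆ Y → u X ≤ u Y) ∧ 0 ≤ u ∅

/-- An allocation is `α`-EF1. -/
def IsAlphaEF1 {n : ℕ} (u : Fin n → Finset V → ℝ) (A : Fin n → Finset V) (α : ℝ) : Prop :=
  ∀ i j : Fin n, i ≠ j → A j ≠ ∅ → ∃ v ∈ A j, α * u i ((A j).erase v) ≤ u i (A i)

/-- An allocation is EFX (envy-free up to any item). -/
def IsEFX {n : ℕ} (u : Fin n → Finset V → ℝ) (A : Fin n → Finset V) : Prop :=
  ∀ i j : Fin n, i ≠ j → A j ≠ ∅ → ∀ v ∈ A j, u i ((A j).erase v) ≤ u i (A i)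

/-- The number of agents receiving positive utility. -/
noncomputable def nashCount {n : ℕ} (u : Fin n → Finset V → ℝ) (A : Fin n → Finset V) : ℕ :=
  (Finset.univ.filter fun i : Fin n => 0 < u i (A i)).card

/-- The product of the positive utilities. -/
noncomputable def nashProd {n : ℕ} (u : Fin n → Finset V → ℝ) (A : Fin n → Finset V) : ℝ :=
  ∏ i ∈ Finset.univ.filter (fun i : Fin n => 0 < u i (A i)), u i (A i)

/-- A maximum Nash welfare (MNW) connected allocation: maximizes the number of agents with
positive utility and, subject to that, the product of the positive utilities. -/
def IsMNW (G : SimpleGraph V) {n : ℕ} (u : Fin n → Finset V → ℝ)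
    (A : Fin n → Finset V) : Prop :=
  IsConnAlloc G A ∧
  (∀ B : Fin n → Finset V, IsConnAlloc G B → nashCount u B ≤ nashCount u A) ∧
  (∀ B : Fin n → Finset V, IsConnAlloc G B →
    nashCount u B = nashCount u A → nashProd u B ≤ nashProd u A)

/-- `A'` is a Pareto-improvement of `A`. -/
def ParetoImproves {n : ℕ} (u : Fin n → Finset V → ℝ) (A' A : Fin n → Finset V) : Prop :=
  (∀ i, u i (A i) ≤ u i (A' i)) ∧ ∃ j, u j (A j) < u j (A' j)

/-- A connected allocation is Pareto-optimal if no connected allocation Pareto-improves it. -/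
def IsParetoOptimal (G : SimpleGraph V) {n : ℕ} (u : Fin n → Finset V → ℝ)
    (A : Fin n → Finset V) : Prop :=
  ∀ B : Fin n → Finset V, IsConnAlloc G B → ¬ ParetoImproves u B A

/-- The vector of agents' utilities rearranged in increasing order. -/
noncomputable def sortedUtils {n : ℕ} (u : Fin n → Finset V → ℝ)
    (A : Fin n → Finset V) : List ℝ :=
  (((Finset.univ : Finset (Fin n)).val.map fun i => u i (A i)).sort (· ≤ ·))

/-- `A'` is a leximin improvement of `A`: the sorted utility vector of `A'` is
lexicographically greater than that of `A`. -/
def LeximinImproves {n : ℕ} (u : Fin n → Finset V → ℝ) (A' A : Fin n → Finset V) : Prop :=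
  List.Lex (· < ·) (sortedUtils u A) (sortedUtils u A')

/-- A connected leximin allocation. -/
def IsLeximin (G : SimpleGraph V) {n : ℕ} (u : Fin n → Finset V → ℝ)
    (A : Fin n → Finset V) : Prop :=
  IsConnAlloc G A ∧ ∀ B : Fin n → Finset V, IsConnAlloc G B → ¬ LeximinImproves u B A

/-- `G` is a star: there is a central vertex adjacent to exactly all other vertices. -/
def IsStar (G : SimpleGraph V) : Prop :=
  ∃ c : V, ∀ a b : V, G.Adj a b ↔ a ≠ b ∧ (a = c ∨ b = c)

/-- A submodular utility function. -/
def SubmodularUtil (u : Finset V → ℝ) : Prop :=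
  ∀ X Y : Finset V, u (X ∪ Y) + u (X ∩ Y) ≤ u X + u Y

/-- A utility function with binary marginal gains (and `u ∅ = 0`). -/
def BinaryMarginalGains (u : Finset V → ℝ) : Prop :=
  u ∅ = 0 ∧ ∀ (X : Finset V) (v : V),
    u (insert v X) - u X = 0 ∨ u (insert v X) - u X = 1

/-- On the path with `m` vertices (edges numbered `1, …, m-1` from left to right),
`itv m x y` is the bundle `[x, y]` of all vertices between positions `x` and `y`. -/
def itv (m x y : ℕ) : Finset (Fin m) :=
  Finset.univ.filter fun v : Fin m => x ≤ v.val ∧ v.val < y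

end GraphFair

/-!
In a star, a connected bundle avoiding the centre is at most a single leaf. Of two disjoint
bundles at least one avoids the centre, so with binary utilities every pairwise maximin share
is at most `1`, and any allocation giving both agents value at least `1` is PMMS. Giving one
agent a single valued leaf and the other the centre with three valued leaves therefore yields
a PMMS allocation in which the envy of the first agent survives the removal of any one item.
-/

namespace GraphFair

open SimpleGraph Finset

variable {V : Type*}

theorem isStar_starGraph (c : V) : IsStar (starGraph c) :=
  ⟨c, fun _ _ => starGraph_adj⟩

theorem bundleConn_singleton (G : SimpleGraph V) (v : V) : BundleConn G {v} := by
  right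
  rw [coe_singleton, induce_singleton_eq_top]
  exact connected_top

theorem bundleConn_starGraph_of_mem {c : V} {B : Finset V} (hc : c ∈ B) :
    BundleConn (starGraph c) B :=
  Or.inr <| Connected.of_isUniversal (v := ⟨c, hc⟩) fun _ hw =>
    starGraph_center_adj (Subtype.coe_ne_coe.mpr hw)

theorem card_le_one_of_bundleConn_starGraph {c : V} {B : Finset V}
    (hB : BundleConn (starGraph c) B) (hc : c ∉ B) : #B ≤ 1 := by
  rcases hB with rfl | hB
  · simp
  have hbot : (starGraph c).induce (B : Set V) = ⊥ := by
    ext x y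
    simp only [comap_adj, Function.Embedding.coe_subtype, starGraph_adj, bot_adj, iff_false]
    rintro ⟨-, hx | hy⟩
    · exact hc (hx ▸ x.2)
    · exact hc (hy ▸ y.2)
  refine card_le_one.mpr fun a ha b hb => ?_
  have hab := hB.preconnected ⟨a, ha⟩ ⟨b, hb⟩
  rw [hbot, reachable_bot] at hab
  exact congrArg Subtype.val hab

namespace BinaryAdditiveUtil

variable {u : Finset V → ℝ}

theorem of_sum {w : V → ℝ} (hw : ∀ v, w v = 0 ∨ w v = 1) :
    BinaryAdditiveUtil fun X => ∑ v ∈ X, w v :=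
  ⟨fun X => by simp only [sum_singleton], fun v => by simpa only [sum_singleton] using hw v⟩

theorem singleton_le_one (hu : BinaryAdditiveUtil u) (v : V) : u {v} ≤ 1 := by
  rcases hu.2 v with h | h <;> norm_num [h]

theorem singleton_nonneg (hu : BinaryAdditiveUtil u) (v : V) : 0 ≤ u {v} := by
  rcases hu.2 v with h | h <;> norm_num [h]

theorem nonneg (hu : BinaryAdditiveUtil u) (X : Finset V) : 0 ≤ u X := by
  rw [hu.1 X]
  exact sum_nonneg fun v _ => hu.singleton_nonneg v

theorem le_card (hu : BinaryAdditiveUtil u) (X : Finset V) : u X ≤ #X := by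
  rw [hu.1 X, card_eq_sum_ones, Nat.cast_sum, Nat.cast_one]
  exact sum_le_sum fun v _ => hu.singleton_le_one v

theorem sub_one_le_erase [DecidableEq V] (hu : BinaryAdditiveUtil u) (X : Finset V) (v : V) :
    u X - 1 ≤ u (X.erase v) := by
  by_cases hv : v ∈ X
  · have hsplit := add_sum_erase X (fun x => u {x}) hv
    rw [← hu.1, ← hu.1] at hsplit
    linarith [hu.singleton_le_one v]
  · rw [erase_eq_of_notMem hv]
    linarith

end BinaryAdditiveUtil

variable [DecidableEq V] {u : Finset V → ℝ}

theorem pmms_starGraph_le_one (c : V) (hu : BinaryAdditiveUtil u) (X : Finset V) :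
    pmms (starGraph c) u X ≤ 1 := by
  refine Real.sSup_le ?_ zero_le_one
  rintro _ ⟨⟨Y, Z⟩, ⟨-, hYZ, hY, hZ⟩, rfl⟩
  have hsmall : ∀ B : Finset V, BundleConn (starGraph c) B → c ∉ B → u B ≤ 1 :=
    fun B hB hc => (hu.le_card B).trans <| by
      exact_mod_cast card_le_one_of_bundleConn_starGraph hB hc
  by_cases hcY : c ∈ Y
  · exact (min_le_right _ _).trans (hsmall Z hZ (disjoint_left.mp hYZ hcY))
  · exact (min_le_left _ _).trans (hsmall Y hY hcY)

theorem isAlphaPMMS_starGraph_one {n : ℕ} (c : V) (hu : BinaryAdditiveUtil u)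
    {A : Fin n → Finset V} (hA : ∀ i, 1 ≤ u (A i)) :
    IsAlphaPMMS (starGraph c) (fun _ => u) A 1 := fun i j _ _ => by
  rw [one_mul]
  exact (pmms_starGraph_le_one c hu _).trans (hA i)

theorem not_isAlphaEF1_one {n : ℕ} (hu : BinaryAdditiveUtil u) {A : Fin n → Finset V}
    {i j : Fin n} (henvy : u (A i) + 1 < u (A j)) : ¬ IsAlphaEF1 (fun _ => u) A 1 := by
  have hij : i ≠ j := by rintro rfl; linarith
  have hAj : A j ≠ ∅ := by
    rintro h
    rw [h, hu.1 ∅, sum_empty] at henvy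
    linarith [hu.nonneg (A i)]
  intro hEF1
  obtain ⟨v, -, hv⟩ := hEF1 i j hij hAj
  linarith [hu.sub_one_le_erase (A j) v]

end GraphFair

open GraphFair in
/-- There exists a star instance with two agents having identical binary
additive utilities that admits a connected allocation which is PMMS but not EF1. -/
theorem exists_star_pmms_not_ef1 :
    ∃ (k : ℕ) (G : SimpleGraph (Fin k)) (u : Finset (Fin k) → ℝ)
      (A : Fin 2 → Finset (Fin k)),
      IsStar G ∧ BinaryAdditiveUtil u ∧ IsConnAlloc G A ∧
      IsAlphaPMMS G (fun _ => u) A 1 ∧ ¬ IsAlphaEF1 (fun _ => u) A 1 := by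
  set u : Finset (Fin 5) → ℝ := fun X => ∑ v ∈ X, if v = 0 then 0 else 1
  set A : Fin 2 → Finset (Fin 5) := ![{1}, {0, 2, 3, 4}]
  have hu : BinaryAdditiveUtil u := .of_sum fun v => by split_ifs <;> simp
  have hA0 : u (A 0) = 1 := by simp [u, A]
  have hA1 : u (A 1) = 3 := by simp [u, A, Finset.sum_insert]; norm_num
  have hconn : ∀ i, BundleConn (SimpleGraph.starGraph 0) (A i) :=
    Fin.forall_fin_two.mpr ⟨bundleConn_singleton _ 1, bundleConn_starGraph_of_mem (by decide)⟩
  have hvalued : ∀ i, 1 ≤ u (A i) := Fin.forall_fin_two.mpr ⟨hA0.ge, by rw [hA1]; norm_num⟩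
  exact ⟨5, SimpleGraph.starGraph 0, u, A, isStar_starGraph 0, hu,
    ⟨by decide, by decide, hconn⟩,
    isAlphaPMMS_starGraph_one 0 hu hvalued,
    not_isAlphaEF1_one hu (i := 0) (j := 1) (by rw [hA0, hA1]; norm_num)⟩
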